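/- arXiv:2603.00011 — 5 statements merged into one kernel-verified Lean document; each statement's English description precedes it below -/
import Mathlib

section
/- Let G be a finite subgroup of the real orthogonal group O(n,ℝ), acting ℂ-linearly on ℂⁿ through its real matrix entries. Let W = {x ∈ ℂⁿ : there exists σ ∈ G with x̄ = σx} (the union of the twisted real subspaces over all of G). Then for every radius r > 0, the n-dimensional Hausdorff measure of W intersected with the open ball B(0,r) equals #Inv(G) times the n-dimensional Hausdorff measure of {x ∈ ℂⁿ : x̄ = x} ∩ B(0,r), where Inv(G) = {σ ∈ G : σ² = id} is the set of involutions of G together with the identity. -/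
open MeasureTheory Matrix
open scoped ENNReal

noncomputable instance (n : ℕ) : MeasurableSpace (EuclideanSpace ℂ (Fin n)) := borel _
instance (n : ℕ) : BorelSpace (EuclideanSpace ℂ (Fin n)) := ⟨rfl⟩

/-- The ℂ-linear action of a real `n × n` matrix on `ℂⁿ` (with its Euclidean metric). -/
noncomputable def mact {n : ℕ} (σ : Matrix (Fin n) (Fin n) ℝ) (x : EuclideanSpace ℂ (Fin n)) :
    EuclideanSpace ℂ (Fin n) :=
  WithLp.toLp 2 (fun i => ∑ j, (σ i j : ℂ) * x j)

/-- Entrywise complex conjugation on `ℂⁿ`. -/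
noncomputable def cconj {n : ℕ} (x : EuclideanSpace ℂ (Fin n)) : EuclideanSpace ℂ (Fin n) :=
  WithLp.toLp 2 (fun i => (starRingEnd ℂ) (x i))

/-!
A twisted real subspace `V_σ = {x : x̄ = σ x}` is totally real (`V_σ ∩ i V_σ = 0`), so its real
dimension is at most the complex dimension of any complex subspace containing it. Because
`x ∈ V_σ` forces `x = σ² x` and `x ∈ V_σ ∩ V_τ` forces `σ x = τ x`, both `V_σ` for `σ² ≠ 1` and
every intersection `V_σ ∩ V_τ` with `σ ≠ τ` lie in proper complex subspaces; they have real
dimension `< n` and are `𝓗ⁿ`-null. For an orthogonal involution `σ` with eigenprojections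
`P, Q = (1 ± σ) / 2`, the unitary `U = P + i Q` satisfies `Ū = σ U`, hence maps `V_1 = ℝⁿ` onto
`V_σ` and each ball onto itself. Adding up over `G` leaves one copy of `𝓗ⁿ(ℝⁿ ∩ B)` per
involution.
-/

open Module Complex
open scoped ComplexConjugate

section TotallyReal

variable {E : Type*} [AddCommGroup E] [Module ℂ E] [Module ℝ E]

def Submodule.IsTotallyReal (p : Submodule ℝ E) : Prop :=
  ∀ x ∈ p, I • x ∈ p → x = 0

theorem Submodule.IsTotallyReal.mono {p q : Submodule ℝ E} (hq : q.IsTotallyReal) (hpq : p ≤ q) :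
    p.IsTotallyReal :=
  fun x hx hIx => hq x (hpq hx) (hpq hIx)

theorem Submodule.IsTotallyReal.finrank_le [IsScalarTower ℝ ℂ E] [FiniteDimensional ℂ E]
    {p : Submodule ℝ E} (hp : p.IsTotallyReal) {L : Submodule ℂ E} (hpL : p ≤ L.restrictScalars ℝ) :
    finrank ℝ p ≤ finrank ℂ L := by
  have : FiniteDimensional ℝ E := .trans ℝ ℂ E
  let mulI : E ≃ₗ[ℝ] E := (LinearEquiv.smulOfNeZero ℂ E I I_ne_zero).restrictScalars ℝ
  have hdisj : p ⊓ p.map mulI.toLinearMap = ⊥ := by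
    refine eq_bot_iff.2 fun x ⟨hx, y, hy, hyx⟩ => ?_
    subst hyx
    simp [hp y hy hx]
  have hsup : p ⊔ p.map mulI.toLinearMap ≤ L.restrictScalars ℝ := by
    refine sup_le hpL ?_
    rintro _ ⟨y, hy, rfl⟩
    exact L.smul_mem I (hpL hy)
  have hL : finrank ℝ (L.restrictScalars ℝ) = 2 * finrank ℂ L := by
    rw [← Complex.finrank_real_complex, Module.finrank_mul_finrank ℝ ℂ L]
    exact ((Submodule.restrictScalarsEquiv ℝ ℂ E L).restrictScalars ℝ).finrank_eq
  have := Submodule.finrank_sup_add_finrank_inf_eq p (p.map mulI.toLinearMap)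
  rw [hdisj, finrank_bot, add_zero, LinearEquiv.finrank_map_eq] at this
  have := Submodule.finrank_mono hsup
  omega

end TotallyReal

theorem Submodule.hausdorffMeasure_eq_zero_of_finrank_lt {E : Type*} [NormedAddCommGroup E]
    [NormedSpace ℝ E] [MeasurableSpace E] [BorelSpace E] (p : Submodule ℝ E)
    [FiniteDimensional ℝ p] {d : ℕ} (hd : finrank ℝ p < d) : μH[d] (p : Set E) = 0 := by
  have hdim : dimH (p : Set E) = finrank ℝ p := by
    rw [show (p : Set E) = Subtype.val '' (Set.univ : Set p) by simp,
      isometry_subtype_coe.dimH_image, Real.dimH_univ_eq_finrank]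
  have := hausdorffMeasure_of_dimH_lt (X := E) (d := d) (by rw [hdim]; exact_mod_cast hd)
  simpa using this

section TwistedReal

variable {n : ℕ}

@[simp]
theorem cconj_cconj (x : EuclideanSpace ℂ (Fin n)) : cconj (cconj x) = x := by
  ext; simp [cconj]

@[simp]
theorem cconj_add (x y : EuclideanSpace ℂ (Fin n)) : cconj (x + y) = cconj x + cconj y := by
  ext; simp [cconj]

@[simp]
theorem cconj_smul (c : ℂ) (x : EuclideanSpace ℂ (Fin n)) : cconj (c • x) = conj c • cconj x := by
  ext; simp [cconj]

@[simp]
theorem cconj_zero : cconj (0 : EuclideanSpace ℂ (Fin n)) = 0 := by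
  ext; simp [cconj]

@[simp]
theorem cconj_eq_zero {x : EuclideanSpace ℂ (Fin n)} : cconj x = 0 ↔ x = 0 := by
  constructor
  · intro h; simpa using congrArg cconj h
  · rintro rfl; exact cconj_zero

noncomputable def cconjₗ : EuclideanSpace ℂ (Fin n) →ₗ[ℝ] EuclideanSpace ℂ (Fin n) where
  toFun := cconj
  map_add' := cconj_add
  map_smul' c x := by simpa using cconj_smul (c : ℂ) x

noncomputable def mactCLM (σ : Matrix (Fin n) (Fin n) ℝ) :
    EuclideanSpace ℂ (Fin n) →L[ℂ] EuclideanSpace ℂ (Fin n) :=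
  toEuclideanCLM (n := Fin n) (𝕜 := ℂ) (Complex.ofRealHom.mapMatrix σ)

@[simp]
theorem mactCLM_apply (σ : Matrix (Fin n) (Fin n) ℝ) (x : EuclideanSpace ℂ (Fin n)) :
    mactCLM σ x = mact σ x := by
  ext; simp [mactCLM, mact, mulVec, dotProduct]

theorem cconj_mactCLM (σ : Matrix (Fin n) (Fin n) ℝ) (x : EuclideanSpace ℂ (Fin n)) :
    cconj (mactCLM σ x) = mactCLM σ (cconj x) := by
  ext; simp [cconj, mact, map_sum]

theorem mactCLM_injective : Function.Injective (mactCLM (n := n)) :=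
  (toEuclideanCLM (n := Fin n) (𝕜 := ℂ)).injective.comp
    (Matrix.map_injective Complex.ofReal_injective)

@[simp]
theorem mactCLM_one : mactCLM (1 : Matrix (Fin n) (Fin n) ℝ) = 1 := by
  simp [mactCLM]

@[simp]
theorem mactCLM_mul (σ τ : Matrix (Fin n) (Fin n) ℝ) :
    mactCLM (σ * τ) = mactCLM σ * mactCLM τ := by
  simp only [mactCLM, map_mul]

theorem star_mactCLM (σ : Matrix (Fin n) (Fin n) ℝ) : star (mactCLM σ) = mactCLM σᵀ := by
  rw [mactCLM, mactCLM, ← map_star]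
  congr 1
  ext; simp

noncomputable def twistedReal (T : EuclideanSpace ℂ (Fin n) →L[ℂ] EuclideanSpace ℂ (Fin n)) :
    Submodule ℝ (EuclideanSpace ℂ (Fin n)) :=
  LinearMap.eqLocus cconjₗ ((T : EuclideanSpace ℂ (Fin n) →ₗ[ℂ] _).restrictScalars ℝ)

@[simp]
theorem mem_twistedReal {T : EuclideanSpace ℂ (Fin n) →L[ℂ] EuclideanSpace ℂ (Fin n)}
    {x : EuclideanSpace ℂ (Fin n)} : x ∈ twistedReal T ↔ cconj x = T x :=
  Iff.rfl

theorem isTotallyReal_twistedReal (T : EuclideanSpace ℂ (Fin n) →L[ℂ] EuclideanSpace ℂ (Fin n)) :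
    (twistedReal T).IsTotallyReal := by
  intro x hx hIx
  rw [mem_twistedReal] at hx hIx
  rw [cconj_smul, hx, map_smul, conj_I] at hIx
  have h2I : ((2 : ℂ) * I) • T x = 0 := by
    rw [mul_smul, two_smul]
    nth_rewrite 1 [← hIx]
    rw [neg_smul, neg_add_cancel]
  have : T x = 0 := (smul_eq_zero.1 h2I).resolve_left (by simp)
  rwa [this, cconj_eq_zero] at hx

end TwistedReal

section HalfTwist

variable {A : Type*} [Ring A] [StarRing A] [Algebra ℂ A] [StarModule ℂ A]

-- For an involution `s` this is `P + I • Q`, where `P, Q = (1 ± s) / 2`.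
noncomputable def halfTwist (s : A) : A := ((1 + I) / 2) • 1 + ((1 - I) / 2) • s

theorem conj_one_add_I_div_two : conj ((1 + I) / 2) = (1 - I) / 2 := by
  rw [map_div₀, map_add, map_one, conj_I, map_ofNat, sub_eq_add_neg]

theorem conj_one_sub_I_div_two : conj ((1 - I) / 2) = (1 + I) / 2 := by
  rw [← conj_one_add_I_div_two, Complex.conj_conj]

theorem halfTwist_mem_unitary {s : A} (hs : IsSelfAdjoint s) (hss : s * s = 1) :
    halfTwist s ∈ unitary A := by
  have hstar : star (halfTwist s) = ((1 - I) / 2) • 1 + ((1 + I) / 2) • s := by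
    rw [halfTwist, star_add, star_smul, star_smul, star_one, hs.star_eq]
    exact congrArg₂ _ (congrArg₂ _ conj_one_add_I_div_two rfl)
      (congrArg₂ _ conj_one_sub_I_div_two rfl)
  rw [Unitary.mem_iff, hstar, halfTwist]
  simp only [add_mul, mul_add, smul_mul_smul, one_mul, mul_one, hss]
  have hI : I * I = -1 := I_mul_I
  constructor
  · linear_combination (norm := module) hI • ((2⁻¹ : ℂ) • (s - 1))
  · linear_combination (norm := module) hI • ((2⁻¹ : ℂ) • (s - 1))

end HalfTwist

section Measure

variable {n : ℕ}

theorem hausdorffMeasure_twistedReal_inf_ker_eq_zero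
    (T : EuclideanSpace ℂ (Fin n) →L[ℂ] EuclideanSpace ℂ (Fin n))
    {F : EuclideanSpace ℂ (Fin n) →L[ℂ] EuclideanSpace ℂ (Fin n)} (hF : F ≠ 0) :
    μH[n] ((twistedReal T ⊓ (LinearMap.ker F.toLinearMap).restrictScalars ℝ :
      Submodule ℝ (EuclideanSpace ℂ (Fin n))) : Set (EuclideanSpace ℂ (Fin n))) = 0 := by
  refine Submodule.hausdorffMeasure_eq_zero_of_finrank_lt _ ?_
  have hker : LinearMap.ker F.toLinearMap ≠ ⊤ := by
    rw [Ne, LinearMap.ker_eq_top]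
    exact fun h => hF (ContinuousLinearMap.coe_injective h)
  calc finrank ℝ ↥(twistedReal T ⊓ (LinearMap.ker F.toLinearMap).restrictScalars ℝ)
      ≤ finrank ℂ (LinearMap.ker F.toLinearMap) :=
        ((isTotallyReal_twistedReal T).mono inf_le_left).finrank_le inf_le_right
    _ < finrank ℂ (EuclideanSpace ℂ (Fin n)) := Submodule.finrank_lt hker
    _ = n := finrank_euclideanSpace_fin

theorem aedisjoint_twistedReal_mactCLM {σ τ : Matrix (Fin n) (Fin n) ℝ} (hστ : σ ≠ τ) :
    AEDisjoint μH[n] (twistedReal (mactCLM σ) : Set (EuclideanSpace ℂ (Fin n)))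
      (twistedReal (mactCLM τ)) := by
  refine measure_mono_null ?_ (hausdorffMeasure_twistedReal_inf_ker_eq_zero
    (mactCLM σ) (sub_ne_zero.2 (mactCLM_injective.ne hστ)))
  rintro x ⟨hσ, hτ⟩
  refine ⟨hσ, ?_⟩
  rw [SetLike.mem_coe, mem_twistedReal] at hσ hτ
  simp [← hσ, ← hτ]

theorem hausdorffMeasure_twistedReal_mactCLM_eq_zero {σ : Matrix (Fin n) (Fin n) ℝ}
    (hσ : σ * σ ≠ 1) : μH[n] (twistedReal (mactCLM σ) : Set (EuclideanSpace ℂ (Fin n))) = 0 := by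
  refine measure_mono_null ?_ (hausdorffMeasure_twistedReal_inf_ker_eq_zero
    (mactCLM σ) (sub_ne_zero.2 (mactCLM_injective.ne hσ)))
  intro x hx
  refine ⟨hx, ?_⟩
  rw [SetLike.mem_coe, mem_twistedReal] at hx
  change (mactCLM (σ * σ) - mactCLM 1 : EuclideanSpace ℂ (Fin n) →L[ℂ] _) x = 0
  rw [mactCLM_mul, mactCLM_one, _root_.sub_apply, mul_apply_eq_comp,
    ← hx, ← cconj_mactCLM, ← hx, cconj_cconj, one_apply_eq_self, sub_self]

end Measure

section Transport

variable {n : ℕ}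

theorem cconj_halfTwist_apply {S : EuclideanSpace ℂ (Fin n) →L[ℂ] EuclideanSpace ℂ (Fin n)}
    (hSS : S * S = 1) (hS : ∀ x, cconj (S x) = S (cconj x)) (x : EuclideanSpace ℂ (Fin n)) :
    cconj (halfTwist S x) = S (halfTwist S (cconj x)) := by
  have hSSx : S (S (cconj x)) = cconj x := by rw [← mul_apply_eq_comp, hSS, one_apply_eq_self]
  simp only [halfTwist, _root_.add_apply, _root_.smul_apply, one_apply_eq_self, cconj_add,
    cconj_smul, hS, map_add, map_smul, hSSx, conj_one_add_I_div_two, conj_one_sub_I_div_two]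
  exact add_comm _ _

theorem hausdorffMeasure_twistedReal_inter_ball
    {S : EuclideanSpace ℂ (Fin n) →L[ℂ] EuclideanSpace ℂ (Fin n)} (hS : IsSelfAdjoint S)
    (hSS : S * S = 1) (hSc : ∀ x, cconj (S x) = S (cconj x)) (d r : ℝ) :
    μH[d] ((twistedReal S : Set (EuclideanSpace ℂ (Fin n))) ∩ Metric.ball 0 r)
      = μH[d] ((twistedReal (n := n) 1 : Set (EuclideanSpace ℂ (Fin n))) ∩ Metric.ball 0 r) := by
  let e := Unitary.linearIsometryEquiv ⟨halfTwist S, halfTwist_mem_unitary hS hSS⟩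
  have hSu : Function.Injective (S ∘ e) :=
    (Function.LeftInverse.injective (g := ⇑S) fun x => by
      rw [← mul_apply_eq_comp, hSS, one_apply_eq_self]).comp e.injective
  have hpre : (twistedReal (n := n) 1 : Set (EuclideanSpace ℂ (Fin n))) ∩ Metric.ball 0 r
      = e ⁻¹' ((twistedReal S : Set (EuclideanSpace ℂ (Fin n))) ∩ Metric.ball 0 r) := by
    ext x
    simp only [Set.mem_inter_iff, Set.mem_preimage, SetLike.mem_coe, mem_twistedReal,
      mem_ball_zero_iff, LinearIsometryEquiv.norm_map]
    have hux : e x = halfTwist S x := rfl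
    rw [hux, cconj_halfTwist_apply hSS hSc, ← hux, one_apply_eq_self]
    exact and_congr_left' hSu.eq_iff.symm
  rw [hpre, ← e.coe_toIsometryEquiv, IsometryEquiv.hausdorffMeasure_preimage]

end Transport

theorem hausdorffMeasure_twistedReal_mactCLM_inter_ball {n : ℕ} {σ : Matrix (Fin n) (Fin n) ℝ}
    (horth : σᵀ * σ = 1) (r : ℝ) :
    μH[n] ((twistedReal (mactCLM σ) : Set (EuclideanSpace ℂ (Fin n))) ∩ Metric.ball 0 r)
      = if σ * σ = 1 then
          μH[n] ((twistedReal (n := n) 1 : Set (EuclideanSpace ℂ (Fin n)))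
            ∩ Metric.ball 0 r)
        else 0 := by
  split_ifs with hσ
  · have hsymm : σᵀ = σ := by
      rw [← mul_one σᵀ, ← hσ, ← mul_assoc, horth, one_mul]
    refine hausdorffMeasure_twistedReal_inter_ball ?_ ?_ (cconj_mactCLM σ) _ r
    · rw [IsSelfAdjoint, star_mactCLM, hsymm]
    · rw [← mactCLM_mul, hσ, mactCLM_one]
  · exact measure_mono_null Set.inter_subset_left (hausdorffMeasure_twistedReal_mactCLM_eq_zero hσ)

theorem stmt0_general (n : ℕ) (G : Finset (Matrix (Fin n) (Fin n) ℝ))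
    (horth : ∀ σ ∈ G, σᵀ * σ = 1)
    (r : ℝ) :
    μH[(n : ℝ)] ({x : EuclideanSpace ℂ (Fin n) | ∃ σ ∈ G, cconj x = mact σ x}
        ∩ Metric.ball 0 r)
      = (Set.ncard {σ : Matrix (Fin n) (Fin n) ℝ | σ ∈ G ∧ σ * σ = 1} : ℝ≥0∞) *
        μH[(n : ℝ)] ({x : EuclideanSpace ℂ (Fin n) | cconj x = x} ∩ Metric.ball 0 r) := by
  classical
  have hW : {x : EuclideanSpace ℂ (Fin n) | ∃ σ ∈ G, cconj x = mact σ x} ∩ Metric.ball 0 r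
      = ⋃ σ ∈ G, (twistedReal (mactCLM σ) : Set (EuclideanSpace ℂ (Fin n))) ∩ Metric.ball 0 r := by
    rw [← Set.iUnion₂_inter]
    congr 1
    ext x
    simp
  have hV : {x : EuclideanSpace ℂ (Fin n) | cconj x = x}
      = (twistedReal (n := n) 1 : Set (EuclideanSpace ℂ (Fin n))) := by
    ext x; simp
  have hdisj : (G : Set (Matrix (Fin n) (Fin n) ℝ)).Pairwise (Function.onFun (AEDisjoint μH[n])
      fun σ => (twistedReal (mactCLM σ) : Set (EuclideanSpace ℂ (Fin n))) ∩ Metric.ball 0 r) :=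
    fun σ _ τ _ hστ => (aedisjoint_twistedReal_mactCLM hστ).mono Set.inter_subset_left
      Set.inter_subset_left
  have hmeas (σ : Matrix (Fin n) (Fin n) ℝ) : NullMeasurableSet
      ((twistedReal (mactCLM σ) : Set (EuclideanSpace ℂ (Fin n))) ∩ Metric.ball 0 r) μH[n] :=
    ((twistedReal (mactCLM σ)).closed_of_finiteDimensional.measurableSet.inter
      measurableSet_ball).nullMeasurableSet
  rw [hW, measure_biUnion_finset₀ hdisj fun σ _ => hmeas σ, hV,
    Finset.sum_congr rfl fun σ hσ => hausdorffMeasure_twistedReal_mactCLM_inter_ball (horth σ hσ) r,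
    Finset.sum_ite, Finset.sum_const_zero, add_zero, Finset.sum_const, nsmul_eq_mul,
    ← Finset.coe_filter, Set.ncard_coe_finset]

/-- For a finite subgroup `G ⊆ O(n, ℝ)` acting ℂ-linearly on `ℂⁿ`,
the union `W` of the twisted real subspaces `{x : x̄ = σx}` over `σ ∈ G` satisfies, for every
radius `r > 0`,
`𝓗ⁿ(W ∩ B(0,r)) = #Inv(G) • 𝓗ⁿ({x : x̄ = x} ∩ B(0,r))`,
where `Inv(G) = {σ ∈ G : σ² = 1}`. -/
theorem stmt0 (n : ℕ) (G : Finset (Matrix (Fin n) (Fin n) ℝ))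
    (hone : (1 : Matrix (Fin n) (Fin n) ℝ) ∈ G)
    (hmul : ∀ σ ∈ G, ∀ τ ∈ G, σ * τ ∈ G)
    (hinv : ∀ σ ∈ G, ∃ τ ∈ G, σ * τ = 1)
    (horth : ∀ σ ∈ G, σᵀ * σ = 1)
    (r : ℝ) (hr : 0 < r) :
    μH[(n : ℝ)] ({x : EuclideanSpace ℂ (Fin n) | ∃ σ ∈ G, cconj x = mact σ x}
        ∩ Metric.ball 0 r)
      = (Set.ncard {σ : Matrix (Fin n) (Fin n) ℝ | σ ∈ G ∧ σ * σ = 1} : ℝ≥0∞) *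
        μH[(n : ℝ)] ({x : EuclideanSpace ℂ (Fin n) | cconj x = x} ∩ Metric.ball 0 r) :=
  stmt0_general n G horth r
end

section
/- Let A be an n×n real matrix with Aᵏ = id for some odd positive integer k, acting ℂ-linearly on ℂⁿ. If x ∈ ℂⁿ satisfies x̄ = A·x, where x̄ denotes entrywise complex conjugation, then x is real, i.e., x̄ = x. -/
/-!
Conjugating `x̄ = A x` gives `x = A x̄ = A² x`. For odd `k = 2m + 1` we have
`A = A^(k+1) = (A²)^(m+1)`, so `A` fixes `x` as well, and then `x̄ = A x = x`.
-/

open Matrix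

/-- The ℂ-linear action of a real `n × n` matrix on `ℂⁿ`. -/
noncomputable def actC {n : ℕ} (g : Matrix (Fin n) (Fin n) ℝ) (x : Fin n → ℂ) : Fin n → ℂ :=
  (g.map fun a => (a : ℂ)).mulVec x

/-- Entrywise complex conjugation on `ℂⁿ`. -/
noncomputable def conjV {n : ℕ} (x : Fin n → ℂ) : Fin n → ℂ :=
  fun i => (starRingEnd ℂ) (x i)

namespace Function

variable {α : Type*} {f σ : α → α} {x : α}

theorem IsFixedPt.of_iterate_two {k : ℕ} (hx : IsFixedPt f^[2] x) (hk : Odd k)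
    (hf : f^[k] = id) : IsFixedPt f x := by
  obtain ⟨m, rfl⟩ := hk
  calc f x = f^[2 * (m + 1)] x := by
        rw [show 2 * (m + 1) = 2 * m + 1 + 1 by ring, iterate_succ_apply', hf, id]
    _ = x := by rw [iterate_mul]; exact hx.iterate (m + 1)

theorem Involutive.isFixedPt_iterate_two_of_apply_eq (hσ : Involutive σ)
    (hcomm : Function.Commute f σ) (hx : σ x = f x) : IsFixedPt f^[2] x :=
  calc f (f x) = f (σ x) := by rw [hx]
    _ = σ (f x) := hcomm x
    _ = x := by rw [← hx, hσ]

end Function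

theorem actC_eq_toLinAlgEquiv' {n : ℕ} (A : Matrix (Fin n) (Fin n) ℝ) :
    actC A = Matrix.toLinAlgEquiv' (Complex.ofRealHom.mapMatrix A) :=
  rfl

theorem actC_pow {n : ℕ} (A : Matrix (Fin n) (Fin n) ℝ) (k : ℕ) :
    actC (A ^ k) = (actC A)^[k] := by
  rw [actC_eq_toLinAlgEquiv', actC_eq_toLinAlgEquiv', map_pow, map_pow, Module.End.coe_pow]

theorem actC_one {n : ℕ} : actC (1 : Matrix (Fin n) (Fin n) ℝ) = id := by
  rw [actC_eq_toLinAlgEquiv', map_one, map_one, Module.End.coe_one]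

theorem conjV_involutive {n : ℕ} : Function.Involutive (conjV (n := n)) :=
  fun x => funext fun i => Complex.conj_conj (x i)

theorem commute_actC_conjV {n : ℕ} (A : Matrix (Fin n) (Fin n) ℝ) :
    Function.Commute (actC A) conjV := by
  intro x
  funext i
  simp [conjV, actC, mulVec, dotProduct, map_sum]

theorem stmt5_general (n : ℕ) (A : Matrix (Fin n) (Fin n) ℝ) (k : ℕ) (hk : Odd k)
    (hA : A ^ k = 1) (x : Fin n → ℂ) (hx : conjV x = actC A x) :
    conjV x = x := by
  have hAk : (actC A)^[k] = id := by rw [← actC_pow, hA, actC_one]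
  have hfix := conjV_involutive.isFixedPt_iterate_two_of_apply_eq (commute_actC_conjV A) hx
  rw [hx]
  exact hfix.of_iterate_two hk hAk

/-- If `A` is a real `n × n` matrix with `Aᵏ = 1` for an odd positive
integer `k`, and `x ∈ ℂⁿ` satisfies `x̄ = A·x`, then `x` is real. -/
theorem stmt5 (n : ℕ) (A : Matrix (Fin n) (Fin n) ℝ) (k : ℕ) (hk : Odd k) (hk0 : 0 < k)
    (hA : A ^ k = 1) (x : Fin n → ℂ) (hx : conjV x = actC A x) :
    conjV x = x :=
  stmt5_general n A k hk hA x hx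
end

section
/- Let G be a finite group of n×n real matrices acting ℂ-linearly on ℂⁿ, let σ ∈ G, and let v ∈ ℝⁿ be a nonzero real vector with σ·v = −v. Let ε be a nonzero real number and set w = iεv ∈ ℂⁿ. Then: (a) for every G-invariant polynomial p in n variables with real coefficients (p(g·x) = p(x) as polynomials for all g ∈ G), the evaluation of p at w (with coefficients regarded in ℂ) is a real number; and (b) w does not lie in the G-orbit of any real vector, i.e., there is no g ∈ G and y ∈ ℝⁿ with w = g·y. -/
open Matrix

/-- Substitution of the linear action of a real matrix into the variables of a real
multivariate polynomial: `x ↦ g·x`. -/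
noncomputable def polyAct {n : ℕ} (g : Matrix (Fin n) (Fin n) ℝ)
    (p : MvPolynomial (Fin n) ℝ) : MvPolynomial (Fin n) ℝ :=
  MvPolynomial.aeval (fun i => ∑ j, MvPolynomial.C (g i j) * MvPolynomial.X j) p

lemma aeval_polyAct {n : ℕ} (g : Matrix (Fin n) (Fin n) ℝ)
    (p : MvPolynomial (Fin n) ℝ) (x : Fin n → ℂ) :
    MvPolynomial.aeval x (polyAct g p) = MvPolynomial.aeval (actC g x) p := by
  rw [polyAct, MvPolynomial.comp_aeval_apply]
  congr 2
  funext i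
  simp [actC, mulVec, dotProduct, Algebra.algebraMap_eq_smul_one, Complex.real_smul]

lemma actC_smul_ofReal {n : ℕ} (g : Matrix (Fin n) (Fin n) ℝ) (c : ℂ) (v : Fin n → ℝ) :
    actC g (fun i => c * (v i : ℂ)) = fun i => c * ((g *ᵥ v) i : ℂ) := by
  funext i
  simp only [actC, mulVec, dotProduct, map_apply, Complex.ofReal_sum, Complex.ofReal_mul,
    Finset.mul_sum]
  congr 1
  funext j
  ring

lemma actC_ofReal {n : ℕ} (g : Matrix (Fin n) (Fin n) ℝ) (y : Fin n → ℝ) :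
    actC g (fun i => (y i : ℂ)) = fun i => ((g *ᵥ y) i : ℂ) := by
  simpa using actC_smul_ofReal g 1 y

/-- Since `p` has real coefficients, conjugating its value is evaluating at the conjugate point,
which `g` reaches from `x` without changing the value. -/
lemma conj_aeval_eq_self_of_polyAct_eq {n : ℕ} {g : Matrix (Fin n) (Fin n) ℝ}
    {p : MvPolynomial (Fin n) ℝ} (hp : polyAct g p = p) {x : Fin n → ℂ}
    (hx : actC g x = fun i => (starRingEnd ℂ) (x i)) :
    (starRingEnd ℂ) (MvPolynomial.aeval x p) = MvPolynomial.aeval x p := by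
  calc (starRingEnd ℂ) (MvPolynomial.aeval x p)
      = MvPolynomial.aeval (fun i => (starRingEnd ℂ) (x i)) p :=
        MvPolynomial.comp_aeval_apply x (Complex.conjAe : ℂ →ₐ[ℝ] ℂ) p
    _ = MvPolynomial.aeval x (polyAct g p) := by rw [← hx, aeval_polyAct]
    _ = MvPolynomial.aeval x p := by rw [hp]

theorem stmt6_general (n : ℕ) (G : Finset (Matrix (Fin n) (Fin n) ℝ))
    (σ : Matrix (Fin n) (Fin n) ℝ) (hσ : σ ∈ G)
    (v : Fin n → ℝ) (hv : v ≠ 0) (hσv : σ.mulVec v = -v)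
    (ε : ℝ) (hε : ε ≠ 0) :
    (∀ p : MvPolynomial (Fin n) ℝ, (∀ g ∈ G, polyAct g p = p) →
      (starRingEnd ℂ) (MvPolynomial.aeval (fun i => Complex.I * (ε : ℂ) * (v i : ℂ)) p)
        = MvPolynomial.aeval (fun i => Complex.I * (ε : ℂ) * (v i : ℂ)) p) ∧
    ¬ ∃ g ∈ G, ∃ y : Fin n → ℝ,
        (fun i => Complex.I * (ε : ℂ) * (v i : ℂ)) = actC g (fun i => (y i : ℂ)) := by
  refine ⟨fun p hp => conj_aeval_eq_self_of_polyAct_eq (hp σ hσ) ?_, ?_⟩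
  · rw [actC_smul_ofReal, hσv]
    funext i
    apply Complex.ext <;> simp
  · rintro ⟨g, -, y, hy⟩
    obtain ⟨i, hi⟩ := Function.ne_iff.mp hv
    have him := congrArg Complex.im (congrFun hy i)
    rw [actC_ofReal, Complex.ofReal_im] at him
    simp only [Complex.mul_im, Complex.I_re, Complex.I_im, Complex.ofReal_re, Complex.ofReal_im]
      at him
    exact hi (by simpa [hε] using him)

/-- Let `G` be a finite group of real `n × n` matrices, `σ ∈ G`, and
`v ∈ ℝⁿ` a nonzero vector with `σ·v = -v`. For `ε ≠ 0` set `w = iεv ∈ ℂⁿ`. Then (a) every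
`G`-invariant real polynomial takes a real value at `w`, and (b) `w` is not in the `G`-orbit
of any real vector. -/
theorem stmt6 (n : ℕ) (G : Finset (Matrix (Fin n) (Fin n) ℝ))
    (hone : (1 : Matrix (Fin n) (Fin n) ℝ) ∈ G)
    (hmul : ∀ σ ∈ G, ∀ τ ∈ G, σ * τ ∈ G)
    (hinv : ∀ σ ∈ G, ∃ τ ∈ G, σ * τ = 1)
    (σ : Matrix (Fin n) (Fin n) ℝ) (hσ : σ ∈ G)
    (v : Fin n → ℝ) (hv : v ≠ 0) (hσv : σ.mulVec v = -v)
    (ε : ℝ) (hε : ε ≠ 0) :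
    (∀ p : MvPolynomial (Fin n) ℝ, (∀ g ∈ G, polyAct g p = p) →
      (starRingEnd ℂ) (MvPolynomial.aeval (fun i => Complex.I * (ε : ℂ) * (v i : ℂ)) p)
        = MvPolynomial.aeval (fun i => Complex.I * (ε : ℂ) * (v i : ℂ)) p) ∧
    ¬ ∃ g ∈ G, ∃ y : Fin n → ℝ,
        (fun i => Complex.I * (ε : ℂ) * (v i : ℂ)) = actC g (fun i => (y i : ℂ)) :=
  stmt6_general n G σ hσ v hv hσv ε hε
end

section
/- Let σ be a permutation of {1,…,n} with σ² = id, and let P_σ be its n×n permutation matrix over ℂ. Then there exists a unitary matrix A ∈ U(n) such that the entrywise complex conjugate of A equals A·P_σ. -/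
/-!
With `ω = (1 + i) / 2` one has `ω² + ω̄² = 0` and `2 |ω|² = 1`, so for any self-adjoint
involution `a` the element `A = ω + ω̄ a` is a square root of `a` commuting with `a`, and
`A* = ω̄ + ω a = A a`. Hence `A* A = A² a = a² = 1`, and when `a` has real entries
(as a permutation matrix does) the entrywise conjugate of `A` is also `ω̄ + ω a = A a`.
-/

open Matrix

noncomputable def permMat {n : ℕ} (σ : Equiv.Perm (Fin n)) : Matrix (Fin n) (Fin n) ℂ :=
  Matrix.of fun i j => if j = σ i then (1 : ℂ) else 0

namespace UnitaryTwist

noncomputable def ω : ℂ := (1 + Complex.I) / 2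

lemma star_ω : star ω = (1 - Complex.I) / 2 := by
  rw [ω, star_div₀, star_add, star_one, Complex.star_def, Complex.conj_I, Complex.conj_ofNat,
    sub_eq_add_neg]

lemma ω_mul_ω_add_star_mul_star : ω * ω + star ω * star ω = 0 := by
  rw [star_ω, ω]; ring_nf; rw [Complex.I_sq]; ring

lemma ω_mul_star_add_star_mul_ω : ω * star ω + star ω * ω = 1 := by
  rw [star_ω, ω]; ring_nf; rw [Complex.I_sq]; ring

section Algebra

variable {R : Type*} [Ring R] [Algebra ℂ R]

noncomputable def twist (a : R) : R := ω • 1 + star ω • a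

lemma commute_twist (a : R) : Commute (twist a) a :=
  ((Commute.one_left a).smul_left _).add_left ((Commute.refl a).smul_left _)

lemma twist_mul_self {a : R} (ha : a * a = 1) : twist a * twist a = a := by
  have expand : twist a * twist a =
      (ω * ω + star ω * star ω) • (1 : R) + (ω * star ω + star ω * ω) • a := by
    simp only [twist, add_mul, mul_add, smul_mul_smul_comm, one_mul, mul_one, ha]
    module
  rw [expand, ω_mul_ω_add_star_mul_star, ω_mul_star_add_star_mul_ω, zero_smul, zero_add,
    one_smul]

lemma twist_mul {a : R} (ha : a * a = 1) : twist a * a = star ω • 1 + ω • a := by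
  simp only [twist, add_mul, smul_mul_assoc, one_mul, ha]
  abel

variable [StarRing R] [StarModule ℂ R]

lemma star_twist {a : R} (ha : IsSelfAdjoint a) : star (twist a) = star ω • 1 + ω • a := by
  rw [twist, star_add, star_smul, star_smul, star_one, ha.star_eq, star_star]

lemma twist_mem_unitary {a : R} (hsa : IsSelfAdjoint a) (ha : a * a = 1) :
    twist a ∈ unitary R := by
  have hstar : star (twist a) = twist a * a := by rw [star_twist hsa, twist_mul ha]
  refine ⟨?_, ?_⟩
  · rw [hstar, mul_assoc, ← (commute_twist a).eq, ← mul_assoc, twist_mul_self ha, ha]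
  · rw [hstar, ← mul_assoc, twist_mul_self ha, ha]

end Algebra

lemma map_conj_twist {m : Type*} [Fintype m] [DecidableEq m] {P : Matrix m m ℂ}
    (hP : P.map (starRingEnd ℂ) = P) :
    (twist P).map (starRingEnd ℂ) = star ω • 1 + ω • P := by
  have conj_smul (c : ℂ) (M : Matrix m m ℂ) :
      (c • M).map (starRingEnd ℂ) = star c • M.map (starRingEnd ℂ) :=
    Matrix.map_smulₛₗ _ _ _ (fun _ => map_mul _ _ _) M
  rw [twist, Matrix.map_add _ (map_add _), conj_smul, conj_smul,
    Matrix.map_one _ (map_zero _) (map_one _), hP, star_star]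

end UnitaryTwist

section PermMatrix

variable {n R : Type*} [DecidableEq n]

lemma permMat_eq_permMatrix {k : ℕ} (σ : Equiv.Perm (Fin k)) :
    permMat σ = σ.permMatrix ℂ := by
  ext i j
  simp [permMat, PEquiv.toMatrix_apply, eq_comm]

lemma Matrix.permMatrix_mul_self_of_mul_self_eq_one [Fintype n] [NonAssocSemiring R]
    {σ : Equiv.Perm n} (hσ : σ * σ = 1) : σ.permMatrix R * σ.permMatrix R = 1 := by
  rw [← permMatrix_mul, hσ, permMatrix_one]

lemma Matrix.isSelfAdjoint_permMatrix_of_mul_self_eq_one [NonAssocSemiring R] [StarRing R]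
    {σ : Equiv.Perm n} (hσ : σ * σ = 1) : IsSelfAdjoint (σ.permMatrix R) := by
  rw [IsSelfAdjoint, star_eq_conjTranspose, conjTranspose_permMatrix,
    mul_eq_one_iff_inv_eq.mp hσ]

lemma Matrix.permMatrix_map_starRingEnd [CommSemiring R] [StarRing R] (σ : Equiv.Perm n) :
    (σ.permMatrix R).map (starRingEnd R) = σ.permMatrix R := by
  ext i j
  simp only [map_apply, PEquiv.toMatrix_apply]
  split_ifs <;> simp

end PermMatrix

open UnitaryTwist in
/-- For every involutive permutation `σ` of `{1,…,n}` there is a unitary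
matrix `A ∈ U(n)` whose entrywise complex conjugate equals `A · P_σ`. -/
theorem stmt11 (n : ℕ) (σ : Equiv.Perm (Fin n)) (hσ : σ * σ = 1) :
    ∃ A : Matrix (Fin n) (Fin n) ℂ, A ∈ Matrix.unitaryGroup (Fin n) ℂ ∧
      A.map (starRingEnd ℂ) = A * permMat σ := by
  rw [permMat_eq_permMatrix]
  have hP : σ.permMatrix ℂ * σ.permMatrix ℂ = 1 := permMatrix_mul_self_of_mul_self_eq_one hσ
  refine ⟨twist (σ.permMatrix ℂ),
    twist_mem_unitary (isSelfAdjoint_permMatrix_of_mul_self_eq_one hσ) hP, ?_⟩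
  rw [twist_mul hP, map_conj_twist (permMatrix_map_starRingEnd σ)]
end

section
/- For ρ > 0 set ζ(ρ) = √ρ·e^{iπ/12} ∈ ℂ, and consider the three collinear complex particles x₁ = ζ(ρ), x₂ = −conj(ζ(ρ)), x₃ = 0 with complex squared separations s₁₃ = ζ², s₂₃ = (conj ζ)², s₁₂ = (ζ + conj ζ)². Then for every ρ > 0 all three squared separations are nonzero, the Lennard-Jones energy E(ρ) = Σ_{pairs} (s⁻⁶ − s⁻³) is a real number (its imaginary part vanishes), and E(ρ) tends to −∞ as ρ → 0⁺. In fact s₁₃⁻⁶ + s₂₃⁻⁶ = −2ρ⁻⁶ while s₁₂⁻⁶ = Cρ⁻⁶ with C = (4cos²(π/12))⁻⁶ < 2, so the ρ⁻⁶ terms contribute −(2−C)ρ⁻⁶. -/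
/-!
Put `s = s₁₃ = ρ e^{iπ/6}`. Then `s₂₃ = conj s` and `s₁₂ = 4 cos²(π/12) ρ = (2 + √3) ρ` is real, so
the energy `φ(s) + conj φ(s) + φ(s₁₂)` is real. Since `s⁶ = -ρ⁶` and `s³ = iρ³`, the two complex
pairs contribute `-2ρ⁻⁶` and their `s⁻³` terms cancel; the real pair is bounded by its repulsive
term `(2 + √3)⁻⁶ ρ⁻⁶`, and `(2 + √3)⁻⁶ < 2`, so `E(ρ) ≤ -(2 - (2 + √3)⁻⁶) ρ⁻⁶ → -∞`.
-/

open Filter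

/-- `ζ(ρ) = √ρ · e^{iπ/12}`. -/
noncomputable def zetaLJ (ρ : ℝ) : ℂ :=
  (Real.sqrt ρ : ℂ) * Complex.exp (Complex.I * ((Real.pi / 12 : ℝ) : ℂ))

/-- Complex squared separation of particles 1 and 3: `s₁₃ = ζ²`. -/
noncomputable def s13 (ρ : ℝ) : ℂ := zetaLJ ρ ^ 2

/-- Complex squared separation of particles 2 and 3: `s₂₃ = (conj ζ)²`. -/
noncomputable def s23 (ρ : ℝ) : ℂ := (starRingEnd ℂ) (zetaLJ ρ) ^ 2

/-- Complex squared separation of particles 1 and 2: `s₁₂ = (ζ + conj ζ)²`. -/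
noncomputable def s12 (ρ : ℝ) : ℂ := (zetaLJ ρ + (starRingEnd ℂ) (zetaLJ ρ)) ^ 2

/-- The Lennard-Jones pair potential on a complex squared separation: `φ(s) = s⁻⁶ - s⁻³`. -/
noncomputable def phiLJ (s : ℂ) : ℂ := (s ^ 6)⁻¹ - (s ^ 3)⁻¹

/-- The total Lennard-Jones energy of the three-particle configuration. -/
noncomputable def Elj (ρ : ℝ) : ℂ := phiLJ (s13 ρ) + phiLJ (s23 ρ) + phiLJ (s12 ρ)

open Complex ComplexConjugate Topology
open scoped Real

lemma phiLJ_conj (s : ℂ) : phiLJ (conj s) = conj (phiLJ s) := by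
  simp only [phiLJ, map_sub, map_inv₀, map_pow]

lemma phiLJ_ofReal (r : ℝ) : phiLJ r = ((r ^ 6)⁻¹ - (r ^ 3)⁻¹ : ℝ) := by
  push_cast [phiLJ]; rfl

lemma s13_eq {ρ : ℝ} (hρ : 0 ≤ ρ) : s13 ρ = ρ * exp (π / 6 * I) := by
  rw [s13, zetaLJ, mul_pow, ← ofReal_pow, Real.sq_sqrt hρ, ← exp_nat_mul]
  push_cast
  ring_nf

lemma s13_pow_six {ρ : ℝ} (hρ : 0 ≤ ρ) : s13 ρ ^ 6 = ((-ρ ^ 6 : ℝ) : ℂ) := by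
  rw [s13_eq hρ, mul_pow, ← exp_nat_mul, show ((6 : ℕ) : ℂ) * (π / 6 * I) = π * I by ring,
    exp_pi_mul_I]
  push_cast
  ring

lemma s13_pow_three {ρ : ℝ} (hρ : 0 ≤ ρ) : s13 ρ ^ 3 = ((ρ ^ 3 : ℝ) : ℂ) * I := by
  rw [s13_eq hρ, mul_pow, ← exp_nat_mul, show ((3 : ℕ) : ℂ) * (π / 6 * I) = π / 2 * I by ring,
    exp_pi_div_two_mul_I]
  push_cast
  ring

lemma s13_ne_zero {ρ : ℝ} (hρ : 0 < ρ) : s13 ρ ≠ 0 := by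
  rw [s13_eq hρ.le]
  exact mul_ne_zero (ofReal_ne_zero.2 hρ.ne') (exp_ne_zero _)

lemma s23_eq_conj_s13 (ρ : ℝ) : s23 ρ = conj (s13 ρ) := by
  rw [s23, s13, map_pow]

lemma s23_pow_six {ρ : ℝ} (hρ : 0 ≤ ρ) : s23 ρ ^ 6 = ((-ρ ^ 6 : ℝ) : ℂ) := by
  rw [s23_eq_conj_s13, ← map_pow, s13_pow_six hρ, conj_ofReal]

lemma s23_ne_zero {ρ : ℝ} (hρ : 0 < ρ) : s23 ρ ≠ 0 := by
  rw [s23_eq_conj_s13]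
  exact (map_ne_zero _).2 (s13_ne_zero hρ)

lemma four_mul_cos_pi_div_twelve_sq : 4 * Real.cos (π / 12) ^ 2 = 2 + √3 := by
  rw [Real.cos_sq, show 2 * (π / 12) = π / 6 by ring, Real.cos_pi_div_six]
  ring

lemma s12_eq {ρ : ℝ} (hρ : 0 ≤ ρ) : s12 ρ = ((4 * Real.cos (π / 12) ^ 2 * ρ : ℝ) : ℂ) := by
  rw [s12, add_conj, zetaLJ, mul_comm I, re_ofReal_mul, exp_ofReal_mul_I_re]
  push_cast
  rw [mul_pow, mul_pow, ← ofReal_pow, Real.sq_sqrt hρ]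
  ring

lemma s12_ne_zero {ρ : ℝ} (hρ : 0 < ρ) : s12 ρ ≠ 0 := by
  rw [s12_eq hρ.le, four_mul_cos_pi_div_twelve_sq]
  exact ofReal_ne_zero.2 (by positivity)

lemma re_phiLJ_s13 {ρ : ℝ} (hρ : 0 ≤ ρ) : (phiLJ (s13 ρ)).re = -(ρ ^ 6)⁻¹ := by
  rw [phiLJ, s13_pow_six hρ, s13_pow_three hρ, mul_inv, inv_I, ← ofReal_inv, ← ofReal_inv]
  simp only [sub_re, ofReal_re, re_ofReal_mul, neg_re, I_re, neg_zero, mul_zero, sub_zero,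
    inv_neg]

lemma Elj_eq {ρ : ℝ} (hρ : 0 ≤ ρ) :
    Elj ρ = ((-2 * (ρ ^ 6)⁻¹ + ((4 * Real.cos (π / 12) ^ 2 * ρ) ^ 6)⁻¹
      - ((4 * Real.cos (π / 12) ^ 2 * ρ) ^ 3)⁻¹ : ℝ) : ℂ) := by
  rw [Elj, s23_eq_conj_s13, phiLJ_conj, add_conj, re_phiLJ_s13 hρ, s12_eq hρ, phiLJ_ofReal]
  push_cast
  ring

lemma inv_four_mul_cos_pi_div_twelve_sq_pow_six_lt_two :
    ((4 * Real.cos (π / 12) ^ 2) ^ 6)⁻¹ < (2 : ℝ) := by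
  have h : (1 : ℝ) ≤ (4 * Real.cos (π / 12) ^ 2) ^ 6 := by
    rw [four_mul_cos_pi_div_twelve_sq]
    exact one_le_pow₀ (by linarith [Real.sqrt_nonneg 3])
  linarith [inv_le_one_of_one_le₀ h]

lemma Elj_re_le {ρ : ℝ} (hρ : 0 < ρ) :
    (Elj ρ).re ≤ (((4 * Real.cos (π / 12) ^ 2) ^ 6)⁻¹ - 2) * ρ⁻¹ ^ 6 := by
  have h_cubic : 0 < ((4 * Real.cos (π / 12) ^ 2 * ρ) ^ 3)⁻¹ := by
    rw [four_mul_cos_pi_div_twelve_sq]; positivity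
  rw [Elj_eq hρ.le, ofReal_re, mul_pow, mul_inv, inv_pow]
  linarith

lemma tendsto_Elj_re_atBot : Tendsto (fun ρ ↦ (Elj ρ).re) (𝓝[>] 0) atBot := by
  refine tendsto_atBot_mono' _ (eventually_mem_nhdsWithin.mono fun ρ hρ ↦ Elj_re_le hρ) ?_
  refine Tendsto.const_mul_atTop_of_neg ?_ ?_
  · linarith [inv_four_mul_cos_pi_div_twelve_sq_pow_six_lt_two]
  · exact (tendsto_pow_atTop (by norm_num)).comp tendsto_inv_nhdsGT_zero

/-- **unbounded dive of the Lennard-Jones potential.** For all `ρ > 0` the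
squared separations are nonzero, the energy `E(ρ)` is real, `E(ρ) → -∞` as `ρ → 0⁺`, and
the explicit identities `s₁₃⁻⁶ + s₂₃⁻⁶ = -2ρ⁻⁶`, `s₁₂⁻⁶ = Cρ⁻⁶` with
`C = (4cos²(π/12))⁻⁶ < 2` hold. -/
theorem stmt15 :
    (∀ ρ : ℝ, 0 < ρ → s13 ρ ≠ 0 ∧ s23 ρ ≠ 0 ∧ s12 ρ ≠ 0) ∧
    (∀ ρ : ℝ, 0 < ρ → (Elj ρ).im = 0) ∧
    Tendsto (fun ρ : ℝ => (Elj ρ).re) (nhdsWithin 0 (Set.Ioi 0)) atBot ∧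
    (∀ ρ : ℝ, 0 < ρ →
      (s13 ρ ^ 6)⁻¹ + (s23 ρ ^ 6)⁻¹ = ((-2 / ρ ^ 6 : ℝ) : ℂ) ∧
      (s12 ρ ^ 6)⁻¹ = ((((4 * Real.cos (Real.pi / 12) ^ 2) ^ 6)⁻¹ / ρ ^ 6 : ℝ) : ℂ)) ∧
    ((4 * Real.cos (Real.pi / 12) ^ 2 : ℝ) ^ 6)⁻¹ < 2 := by
  refine ⟨fun ρ hρ ↦ ⟨s13_ne_zero hρ, s23_ne_zero hρ, s12_ne_zero hρ⟩,
    fun ρ hρ ↦ by rw [Elj_eq hρ.le, ofReal_im], tendsto_Elj_re_atBot, fun ρ hρ ↦ ⟨?_, ?_⟩,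
    inv_four_mul_cos_pi_div_twelve_sq_pow_six_lt_two⟩
  · rw [s13_pow_six hρ.le, s23_pow_six hρ.le]
    push_cast
    ring
  · rw [s12_eq hρ.le, ← ofReal_pow, ← ofReal_inv, mul_pow, mul_inv, ← div_eq_mul_inv]
end
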